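/- In any finite forest with n vertices, the number of vertices that either have degree at most 1 or lie on a path of at least l consecutive degree-2 vertices is at least n/(2(l+1)). -/

import Mathlib

/-!
Let `S` be the set of vertices of degree `≤ 1` or on a path of `l` degree-2 vertices. A vertex of
degree 2 outside `S` lies on a longest path of degree-2 vertices, which has fewer than `l`
vertices, so the vertex is fewer than `l / 2` steps from one end. In a forest each end has a
neighbour of degree `≠ 2` off the path, so the vertex is reached in fewer than `l / 2` steps from
one of the `∑_{deg y ≠ 2} deg y` darts leaving a vertex of degree `≠ 2`, walking straight on
through degree-2 vertices. A forest has `|E| + #{deg = 0} ≤ n`, which bounds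
that sum by `4 #{deg ≤ 1}` and `#{deg ≥ 3}` by `#{deg ≤ 1}`. Hence
`n ≤ #S + (l / 2) · 4 #{deg ≤ 1} + #{deg ≤ 1} ≤ (2l + 2) #S`.
-/

open Finset

namespace SimpleGraph

variable {V : Type*} {G : SimpleGraph V}

theorem IsAcyclic.card_edgeFinset_le [Fintype V] [Fintype G.edgeSet] (hG : G.IsAcyclic) :
    #G.edgeFinset ≤ Fintype.card V := by
  classical
  cases isEmpty_or_nonempty V
  · simp [Subsingleton.elim G ⊥]
  obtain ⟨T, hGT, hT⟩ := exists_maximal_isAcyclic_of_le_isAcyclic (le_top : G ≤ ⊤) hG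
  have hTree : T.IsTree := maximal_isAcyclic_iff_isTree.1 (by simpa using hT)
  calc #G.edgeFinset ≤ #T.edgeFinset := card_le_card (edgeFinset_subset_edgeFinset.2 hGT)
    _ ≤ Fintype.card V := by have := hTree.card_edgeFinset; omega

theorem IsAcyclic.card_edgeFinset_add_card_isolated_le [Fintype V] [DecidableRel G.Adj]
    (hG : G.IsAcyclic) : #G.edgeFinset + #{v | G.degree v = 0} ≤ Fintype.card V := by
  classical
  have hsupp : Fintype.card G.support + #{v | G.degree v = 0} = Fintype.card V := by
    rw [Fintype.card_subtype, ← card_univ,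
      ← card_filter_add_card_filter_not (s := univ) (p := (· ∈ G.support))]
    congr 2
    ext v
    simp [mem_support, ← degree_pos_iff_exists_adj]
  rw [← card_edgeFinset_induce_support]
  have := (hG.induce G.support).card_edgeFinset_le
  omega

theorem IsAcyclic.sum_degree_sub_two_add_card_isolated_nonpos [Fintype V] [DecidableRel G.Adj]
    (hG : G.IsAcyclic) :
    ∑ v, ((G.degree v : ℤ) - 2) + 2 * #{v | G.degree v = 0} ≤ 0 := by
  have hsum : ∑ v, (G.degree v : ℤ) = 2 * #G.edgeFinset :=
    mod_cast G.sum_degrees_eq_twice_card_edges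
  have := hG.card_edgeFinset_add_card_isolated_le
  rw [sum_sub_distrib, hsum, sum_const, card_univ]
  simp only [nsmul_eq_mul]
  omega

theorem IsAcyclic.sum_degree_ne_two_le [Fintype V] [DecidableRel G.Adj] (hG : G.IsAcyclic) :
    ∑ v with G.degree v ≠ 2, G.degree v ≤ 4 * #{v | G.degree v ≤ 1} := by
  have h := hG.sum_degree_sub_two_add_card_isolated_nonpos
  rw [card_filter] at h ⊢
  rw [sum_filter, ← Nat.cast_le (α := ℤ)]
  push_cast at h ⊢
  calc ∑ v, (if G.degree v ≠ 2 then (G.degree v : ℤ) else 0)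
      ≤ ∑ v, (4 * (if G.degree v ≤ 1 then 1 else 0) + 3 * ((G.degree v : ℤ) - 2) +
          6 * if G.degree v = 0 then 1 else 0) :=
        sum_le_sum fun v _ => by split_ifs <;> omega
    _ = 4 * ∑ v, (if G.degree v ≤ 1 then 1 else 0) + 3 * ∑ v, ((G.degree v : ℤ) - 2) +
          6 * ∑ v, (if G.degree v = 0 then 1 else 0) := by
        simp only [sum_add_distrib, mul_sum]
    _ ≤ 4 * ∑ v, (if G.degree v ≤ 1 then 1 else 0) := by linarith

theorem IsAcyclic.card_three_le_degree_le_card_degree_le_one [Fintype V] [DecidableRel G.Adj]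
    (hG : G.IsAcyclic) :
    #{v | 3 ≤ G.degree v} ≤ #{v | G.degree v ≤ 1} := by
  have h := hG.sum_degree_sub_two_add_card_isolated_nonpos
  rw [card_filter] at h ⊢
  rw [card_filter, ← Nat.cast_le (α := ℤ)]
  push_cast at h ⊢
  calc ∑ v, (if 3 ≤ G.degree v then (1 : ℤ) else 0)
      ≤ ∑ v, ((if G.degree v ≤ 1 then 1 else 0) + ((G.degree v : ℤ) - 2) +
          2 * if G.degree v = 0 then 1 else 0) :=
        sum_le_sum fun v _ => by split_ifs <;> omega
    _ = ∑ v, (if G.degree v ≤ 1 then 1 else 0) + ∑ v, ((G.degree v : ℤ) - 2) +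
          2 * ∑ v, (if G.degree v = 0 then 1 else 0) := by
        simp only [sum_add_distrib, mul_sum]
    _ ≤ ∑ v, (if G.degree v ≤ 1 then 1 else 0) := by linarith

theorem IsAcyclic.exists_adj_notMem (hG : G.IsAcyclic) [G.LocallyFinite] {x : V} {r : List V}
    (hnd : (x :: r).Nodup) (hch : (x :: r).IsChain G.Adj) (hx : 2 ≤ G.degree x) :
    ∃ y, G.Adj x y ∧ y ∉ x :: r := by
  classical
  cases r with
  | nil =>
    obtain ⟨y, hy⟩ := (G.degree_pos_iff_exists_adj x).1 (by omega)
    exact ⟨y, hy, by simpa using hy.ne'⟩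
  | cons z r =>
    have : ((G.neighborFinset x).erase z).Nonempty := by
      rw [← card_pos]
      have := pred_card_le_card_erase (s := G.neighborFinset x) (a := z)
      rw [card_neighborFinset_eq_degree] at this
      omega
    obtain ⟨y, hy⟩ := this
    rw [mem_erase, mem_neighborFinset] at hy
    obtain ⟨hyz, hy⟩ := hy
    refine ⟨y, hy, ?_⟩
    rw [List.mem_cons]
    rintro (rfl | hmem)
    · exact hy.ne rfl
    · let W := Walk.ofSupport (x :: z :: r) (List.cons_ne_nil _ _) hch
      have hW : W.IsPath := by rw [Walk.isPath_def, Walk.support_ofSupport]; exact hnd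
      have hyW : y ∈ W.support := by
        rw [Walk.support_ofSupport]
        exact List.mem_cons_of_mem _ hmem
      exact hyz ((hG.eq_snd_of_adj_start hW hy hyW).trans (Walk.snd_cons _ _))

/-- A neighbour of `w` other than `u`; an arbitrary vertex if there is none. -/
noncomputable def nextVertex (G : SimpleGraph V) (u w : V) : V :=
  haveI : Nonempty V := ⟨w⟩
  Classical.epsilon fun x => G.Adj w x ∧ x ≠ u

/-- The walk entering `x` from `y` that never turns back; through degree-2 vertices it is forced,
see `follow_eq_getElem`. -/
noncomputable def follow (G : SimpleGraph V) : V → V → ℕ → V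
  | _, x, 0 => x
  | y, x, k + 1 => follow G x (G.nextVertex y x) k

theorem nextVertex_eq [G.LocallyFinite] {u w x : V} (hw : G.degree w = 2) (hu : G.Adj w u)
    (hx : G.Adj w x) (hxu : x ≠ u) : G.nextVertex u w = x := by
  classical
  have hspec : G.Adj w (G.nextVertex u w) ∧ G.nextVertex u w ≠ u :=
    haveI : Nonempty V := ⟨w⟩
    Classical.epsilon_spec (p := fun x => G.Adj w x ∧ x ≠ u) ⟨x, hx, hxu⟩
  have hcard : #((G.neighborFinset w).erase u) ≤ 1 := by
    rw [card_erase_of_mem (by simpa using hu), card_neighborFinset_eq_degree, hw]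
  exact card_le_one.1 hcard _ (by simpa using hspec.symm) _ (by simpa using ⟨hxu, hx⟩)

theorem follow_eq_getElem [G.LocallyFinite] :
    ∀ {y x : V} {r : List V}, (y :: x :: r).Nodup → (y :: x :: r).IsChain G.Adj →
      (∀ u ∈ x :: r, G.degree u = 2) →
        ∀ k (hk : k < r.length + 1), G.follow y x k = (x :: r)[k]
  | _, _, _, _, _, _, 0, _ => rfl
  | y, x, z :: r, hnd, hch, hdeg, k + 1, hk => by
    have hzy : z ≠ y := fun h => (List.nodup_cons.1 hnd).1 (by simp [h])
    have hz : G.nextVertex y x = z :=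
      nextVertex_eq (hdeg x (List.mem_cons_self ..)) hch.rel.symm hch.of_cons.rel hzy
    rw [follow, hz]
    exact follow_eq_getElem hnd.of_cons hch.of_cons
      (fun u hu => hdeg u (List.mem_cons_of_mem _ hu)) k (by simpa using hk)

section DegreeTwoPaths

variable [Fintype V] [DecidableRel G.Adj]

variable (G) in
def IsDegreeTwoPath (p : List V) : Prop :=
  p.Nodup ∧ p.IsChain G.Adj ∧ ∀ u ∈ p, G.degree u = 2

variable (G) in
def OnLongDegreeTwoPath (l : ℕ) (v : V) : Prop :=
  ∃ p, G.IsDegreeTwoPath p ∧ v ∈ p ∧ l ≤ p.length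

theorem IsDegreeTwoPath.reverse {p : List V} (hp : G.IsDegreeTwoPath p) :
    G.IsDegreeTwoPath p.reverse :=
  ⟨List.nodup_reverse.2 hp.1, List.isChain_reverse.2 (hp.2.1.imp fun _ _ h => h.symm),
    fun u hu => hp.2.2 u (List.mem_reverse.1 hu)⟩

theorem exists_longest_isDegreeTwoPath {v : V} (hv : G.degree v = 2) :
    ∃ p, G.IsDegreeTwoPath p ∧ v ∈ p ∧
      ∀ q, G.IsDegreeTwoPath q → v ∈ q → q.length ≤ p.length := by
  classical
  let P n := ∃ p, G.IsDegreeTwoPath p ∧ v ∈ p ∧ p.length = n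
  have hbound : ∀ q, G.IsDegreeTwoPath q → q.length ≤ Fintype.card V :=
    fun q hq => hq.1.length_le_card
  have hsingle : G.IsDegreeTwoPath [v] := ⟨List.nodup_singleton v, .singleton v, by simpa⟩
  obtain ⟨p, hp, hvp, hlen⟩ :=
    Nat.findGreatest_spec (P := P) (hbound _ hsingle)
      ⟨[v], hsingle, List.mem_singleton_self v, rfl⟩
  exact ⟨p, hp, hvp, fun q hq hvq =>
    hlen ▸ Nat.le_findGreatest (hbound q hq) ⟨q, hq, hvq, rfl⟩⟩

theorem IsAcyclic.exists_follow_eq_getElem (hG : G.IsAcyclic) {v : V} {p : List V}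
    (hp : G.IsDegreeTwoPath p) (hvp : v ∈ p)
    (hmax : ∀ q, G.IsDegreeTwoPath q → v ∈ q → q.length ≤ p.length)
    (i : ℕ) (hi : i < p.length) :
    ∃ y x, G.Adj y x ∧ G.degree y ≠ 2 ∧ G.follow y x i = p[i] := by
  obtain ⟨hnd, hch, hdeg⟩ := hp
  cases p with
  | nil => simp at hi
  | cons x r =>
    obtain ⟨y, hxy, hy⟩ := hG.exists_adj_notMem hnd hch (hdeg x (List.mem_cons_self ..)).ge
    have hnd' : (y :: x :: r).Nodup := List.nodup_cons.2 ⟨hy, hnd⟩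
    have hch' : (y :: x :: r).IsChain G.Adj := List.isChain_cons_cons.2 ⟨hxy.symm, hch⟩
    refine ⟨y, x, hxy.symm, fun hy2 => ?_, follow_eq_getElem hnd' hch' hdeg i hi⟩
    have hext : G.IsDegreeTwoPath (y :: x :: r) :=
      ⟨hnd', hch', by simpa [hy2] using hdeg⟩
    simpa using hmax _ hext (List.mem_cons_of_mem _ hvp)

theorem IsAcyclic.exists_follow_eq_of_not_onLongDegreeTwoPath (hG : G.IsAcyclic) (l : ℕ)
    {v : V} (hv : G.degree v = 2) (hshort : ¬ G.OnLongDegreeTwoPath l v) :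
    ∃ y x k, G.Adj y x ∧ G.degree y ≠ 2 ∧ k < l / 2 ∧ G.follow y x k = v := by
  obtain ⟨p, hp, hvp, hmax⟩ := exists_longest_isDegreeTwoPath hv
  have hlen : p.length < l := not_le.1 fun h => hshort ⟨p, hp, hvp, h⟩
  obtain ⟨i, hi, rfl⟩ := List.getElem_of_mem hvp
  by_cases h : i < l / 2
  · obtain ⟨y, x, hyx, hy, hf⟩ := hG.exists_follow_eq_getElem hp hvp hmax i hi
    exact ⟨y, x, i, hyx, hy, h, hf⟩
  · obtain ⟨y, x, hyx, hy, hf⟩ := hG.exists_follow_eq_getElem hp.reverse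
      (List.mem_reverse.2 hvp) (by simpa using hmax) (p.length - 1 - i) (by simp; omega)
    refine ⟨y, x, p.length - 1 - i, hyx, hy, by omega, ?_⟩
    rw [hf, List.getElem_reverse]
    congr 1
    omega

open Classical in
theorem IsAcyclic.card_not_onLongDegreeTwoPath_le (hG : G.IsAcyclic) (l : ℕ) :
    #{v | G.degree v = 2 ∧ ¬ G.OnLongDegreeTwoPath l v} ≤
      l / 2 * ∑ y with G.degree y ≠ 2, G.degree y := by
  have hsub : ({v | G.degree v = 2 ∧ ¬ G.OnLongDegreeTwoPath l v} : Finset V) ⊆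
      ({y | G.degree y ≠ 2} : Finset V).biUnion fun y =>
        (G.neighborFinset y).biUnion fun x => (range (l / 2)).image (G.follow y x) := by
    intro v hv
    obtain ⟨y, x, k, hyx, hy, hk, rfl⟩ :=
      hG.exists_follow_eq_of_not_onLongDegreeTwoPath l (mem_filter.1 hv).2.1 (mem_filter.1 hv).2.2
    simp only [mem_biUnion, mem_filter, mem_univ, true_and, mem_neighborFinset, mem_image,
      mem_range]
    exact ⟨y, hy, x, hyx, k, hk, rfl⟩
  calc _ ≤ _ := card_le_card hsub
    _ ≤ ∑ y with G.degree y ≠ 2,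
          ∑ x ∈ G.neighborFinset y, #((range (l / 2)).image (G.follow y x)) :=
      card_biUnion_le.trans (sum_le_sum fun _ _ => card_biUnion_le)
    _ ≤ ∑ y with G.degree y ≠ 2, ∑ x ∈ G.neighborFinset y, l / 2 :=
      sum_le_sum fun _ _ => sum_le_sum fun _ _ => card_image_le.trans (card_range _).le
    _ = l / 2 * ∑ y with G.degree y ≠ 2, G.degree y := by
      simp [mul_sum, mul_comm]

theorem IsAcyclic.card_le_ncard_rake_or_compress (hG : G.IsAcyclic) (l : ℕ) :
    Fintype.card V ≤
      {v | G.degree v ≤ 1 ∨ G.OnLongDegreeTwoPath l v}.ncard * (2 * (l + 1)) := by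
  classical
  rw [Set.ncard_eq_toFinset_card', Set.toFinset_ofPred]
  set S : Finset V := {v | G.degree v ≤ 1 ∨ G.OnLongDegreeTwoPath l v}
  set B : Finset V := {v | G.degree v = 2 ∧ ¬ G.OnLongDegreeTwoPath l v}
  set L : Finset V := {v | G.degree v ≤ 1}
  set T : Finset V := {v | 3 ≤ G.degree v}
  have hcover : Fintype.card V ≤ #S + #B + #T := by
    calc Fintype.card V ≤ #(S ∪ B ∪ T) := by
          rw [← card_univ]
          refine card_le_card fun v _ => ?_
          simp only [S, B, T, mem_union, mem_filter, mem_univ, true_and]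
          have : G.degree v ≤ 1 ∨ G.degree v = 2 ∨ 3 ≤ G.degree v := by omega
          tauto
      _ ≤ #S + #B + #T :=
          (card_union_le _ _).trans (Nat.add_le_add_right (card_union_le _ _) _)
  have hleaves : #L ≤ #S := card_le_card fun v hv => by
    simp only [S, L, mem_filter, mem_univ, true_and] at hv ⊢
    exact .inl hv
  have hB : #B ≤ 2 * l * #L := calc
    #B ≤ l / 2 * ∑ y with G.degree y ≠ 2, G.degree y := hG.card_not_onLongDegreeTwoPath_le l
    _ ≤ l / 2 * (4 * #L) := Nat.mul_le_mul_left _ hG.sum_degree_ne_two_le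
    _ ≤ 2 * l * #L := by have := Nat.div_mul_le_self l 2; nlinarith
  have hbranch : #T ≤ #L := hG.card_three_le_degree_le_card_degree_le_one
  nlinarith [Nat.mul_le_mul_left (2 * l) hleaves]

end DegreeTwoPaths

end SimpleGraph

theorem rake_compress_elimination_general {V : Type*} [Fintype V] (G : SimpleGraph V)
    [DecidableRel G.Adj] (hforest : G.IsAcyclic) (l : ℕ) :
    (Fintype.card V : ℝ) / (2 * (l + 1)) ≤
      ({v : V | G.degree v ≤ 1 ∨
        ∃ p : List V, p.Nodup ∧ v ∈ p ∧ l ≤ p.length ∧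
          p.Chain' G.Adj ∧ ∀ u ∈ p, G.degree u = 2}.ncard : ℝ) := by
  have key := hforest.card_le_ncard_rake_or_compress l
  rw [div_le_iff₀ (by positivity)]
  have hcompress (v : V) : G.OnLongDegreeTwoPath l v ↔ ∃ p : List V, p.Nodup ∧ v ∈ p ∧
      l ≤ p.length ∧ p.IsChain G.Adj ∧ ∀ u ∈ p, G.degree u = 2 :=
    exists_congr fun _ => ⟨fun ⟨⟨hnd, hch, hdeg⟩, hv, hl⟩ => ⟨hnd, hv, hl, hch, hdeg⟩,
      fun ⟨hnd, hv, hl, hch, hdeg⟩ => ⟨⟨hnd, hch, hdeg⟩, hv, hl⟩⟩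
  simp only [hcompress] at key
  exact_mod_cast key

/-- In any finite forest with `n` vertices, the vertices that either have degree at most 1 or
lie on a path of at least `l` consecutive degree-2 vertices number at least `n / (2(l+1))`. -/
theorem rake_compress_elimination {V : Type*} [Fintype V] (G : SimpleGraph V)
    [DecidableRel G.Adj] (hforest : G.IsAcyclic) (l : ℕ) (hl : 1 ≤ l) :
    (Fintype.card V : ℝ) / (2 * (l + 1)) ≤
      ({v : V | G.degree v ≤ 1 ∨
        ∃ p : List V, p.Nodup ∧ v ∈ p ∧ l ≤ p.length ∧
          p.Chain' G.Adj ∧ ∀ u ∈ p, G.degree u = 2}.ncard : ℝ) :=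
  rake_compress_elimination_general G hforest l
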